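/- Let C ⊆ {1,...,d}^2 be a connected set in the graph whose vertices are attribute pairs and whose edges join pairs at Hamming distance one, and suppose C is contiguous. Then the discrete affine hull of C equals the Cartesian product C_1 × C_2, where C_1 and C_2 are the sets of values assumed by the first and second coordinates of points in C respectively. -/
import Mathlib

/-- Concatenated one-hot encoding of a pair of attributes in `{1,…,d}²`. -/
def sig2 {d : ℕ} (z : Fin d × Fin d) : Fin d ⊕ Fin d → ℝ :=
  Sum.elim (fun k => if z.1 = k then 1 else 0) (fun k => if z.2 = k then 1 else 0)

/-- Membership in the discrete affine hull of `C ⊆ {1,…,d}²`. -/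
def DAff2 {d : ℕ} (C : Finset (Fin d × Fin d)) (z : Fin d × Fin d) : Prop :=
  ∃ α : Fin d × Fin d → ℝ, ∑ w ∈ C, α w = 1 ∧ sig2 z = ∑ w ∈ C, α w • sig2 w

/-- Two grid points are adjacent if they differ in exactly one coordinate
(Hamming distance one). -/
def Adj {d : ℕ} (a b : Fin d × Fin d) : Prop :=
  (a.1 = b.1 ∧ a.2 ≠ b.2) ∨ (a.1 ≠ b.1 ∧ a.2 = b.2)

/-- `C` is connected: any two of its points are joined by a path within `C`
whose consecutive points are at Hamming distance one. -/
def ConnectedIn {d : ℕ} (C : Finset (Fin d × Fin d)) : Prop :=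
  ∀ a ∈ C, ∀ b ∈ C,
    Relation.ReflTransGen (fun u v => u ∈ C ∧ v ∈ C ∧ Adj u v) a b

/-- `C` is contiguous: for each coordinate, every value between two assumed
values is also assumed by some point of `C`. -/
def Contiguous {d : ℕ} (C : Finset (Fin d × Fin d)) : Prop :=
  (∀ k : Fin d, (∃ p ∈ C, p.1 ≤ k) → (∃ p ∈ C, k ≤ p.1) → ∃ p ∈ C, p.1 = k) ∧
  (∀ k : Fin d, (∃ p ∈ C, p.2 ≤ k) → (∃ p ∈ C, k ≤ p.2) → ∃ p ∈ C, p.2 = k)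

lemma sum_ind_sig2 {d : ℕ} (C : Finset (Fin d × Fin d)) {a : Fin d × Fin d} (ha : a ∈ C) :
    ∑ w ∈ C, (if w = a then (1:ℝ) else 0) • sig2 w = sig2 a := by
  rw [Finset.sum_eq_single a]
  · simp
  · intro b _ hb; simp [hb]
  · intro h; exact absurd ha h

lemma daff_mem {d : ℕ} {C : Finset (Fin d × Fin d)} {a : Fin d × Fin d} (ha : a ∈ C) :
    DAff2 C a := by
  refine ⟨fun w => if w = a then 1 else 0, ?_, ?_⟩
  · rw [Finset.sum_ite_eq' C a]; simp [ha]
  · rw [sum_ind_sig2 C ha]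

lemma daff_step {d : ℕ} {C : Finset (Fin d × Fin d)} {z u v z' : Fin d × Fin d}
    (hz : DAff2 C z) (hu : u ∈ C) (hv : v ∈ C)
    (h : sig2 z' = sig2 z + sig2 v - sig2 u) : DAff2 C z' := by
  obtain ⟨α, hsum, heq⟩ := hz
  refine ⟨fun w => α w + (if w = v then 1 else 0) - (if w = u then 1 else 0), ?_, ?_⟩
  · rw [Finset.sum_sub_distrib, Finset.sum_add_distrib, hsum,
      Finset.sum_ite_eq' C v, Finset.sum_ite_eq' C u]
    simp [hu, hv]
  · have : ∀ w, (α w + (if w = v then (1:ℝ) else 0) - (if w = u then 1 else 0)) • sig2 w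
        = α w • sig2 w + (if w = v then (1:ℝ) else 0) • sig2 w
          - (if w = u then (1:ℝ) else 0) • sig2 w := by
      intro w; rw [sub_smul, add_smul]
    simp only [this]
    rw [Finset.sum_sub_distrib, Finset.sum_add_distrib, ← heq,
      sum_ind_sig2 C hu, sum_ind_sig2 C hv, h]

lemma daff_path {d : ℕ} {C : Finset (Fin d × Fin d)} {a b : Fin d × Fin d}
    (ha : a ∈ C)
    (hpath : Relation.ReflTransGen (fun u v => u ∈ C ∧ v ∈ C ∧ Adj u v) a b) :
    DAff2 C (a.1, b.2) := by
  induction hpath with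
  | refl => exact (Prod.mk.eta ▸ daff_mem ha : DAff2 C (a.1, a.2))
  | tail _ hstep ih =>
    obtain ⟨hu, hv, hadj⟩ := hstep
    rcases hadj with ⟨h1, _⟩ | ⟨_, h2⟩
    · refine daff_step ih hu hv ?_
      funext k
      cases k with
      | inl k => simp [sig2, h1]
      | inr k => simp [sig2]
    · rw [← h2]; exact ih

/-- The discrete affine hull of a contiguous connected set `C` equals the
Cartesian product `C₁ × C₂` of the sets of values assumed by the first and
second coordinates of points of `C`. -/
theorem stmt14 {d : ℕ} (C : Finset (Fin d × Fin d))
    (hconn : ConnectedIn C) (hcont : Contiguous C) :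
    ∀ z : Fin d × Fin d,
      DAff2 C z ↔ (z.1 ∈ C.image Prod.fst ∧ z.2 ∈ C.image Prod.snd) := by
  intro z
  constructor
  · rintro ⟨α, hsum, heq⟩
    constructor
    · by_contra h
      simp only [Finset.mem_image, not_exists, not_and] at h
      have h1 := congrFun heq (Sum.inl z.1)
      rw [Finset.sum_apply] at h1
      have h0 : ∑ w ∈ C, (α w • sig2 w) (Sum.inl z.1) = 0 :=
        Finset.sum_eq_zero fun w hw => by simp [sig2, h w hw]
      rw [h0] at h1
      simp [sig2] at h1
    · by_contra h
      simp only [Finset.mem_image, not_exists, not_and] at h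
      have h1 := congrFun heq (Sum.inr z.2)
      rw [Finset.sum_apply] at h1
      have h0 : ∑ w ∈ C, (α w • sig2 w) (Sum.inr z.2) = 0 :=
        Finset.sum_eq_zero fun w hw => by simp [sig2, h w hw]
      rw [h0] at h1
      simp [sig2] at h1
  · rintro ⟨h1, h2⟩
    simp only [Finset.mem_image] at h1 h2
    obtain ⟨a, ha, ha1⟩ := h1
    obtain ⟨b, hb, hb2⟩ := h2
    have := daff_path ha (hconn a ha b hb)
    rw [ha1, hb2] at this
    simpa using this
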